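/- Let (T, θ) be a stratified staged tree of level m and let 1 ≤ q ≤ m−1. If (T, θ) is balanced, then the truncated staged tree T^{(q)}, consisting of all vertices of level at most q with the induced edges and labelling, is also balanced and stratified. -/

import Mathlib

open MvPolynomial

inductive STree (L : Type) where
  | leaf : STree L
  | node : List (L × STree L) → STree L

namespace STree

variable {L : Type}

def children : STree L → List (L × STree L)
  | .leaf => []
  | .node cs => cs

def paths : STree L → List (List L)
  | .leaf => [[]]
  | .node cs => cs.attach.flatMap (fun x => (paths x.1.2).map (fun p => x.1.1 :: p))
termination_by t => sizeOf t
decreasing_by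
  have h := List.sizeOf_lt_of_mem x.2
  obtain ⟨⟨l, c⟩, hm⟩ := x
  simp only [Prod.mk.sizeOf_spec] at h
  simp only [STree.node.sizeOf_spec]
  omega

noncomputable def tpoly (T : STree L) : MvPolynomial L ℝ :=
  ((paths T).map (fun p => (p.map X).prod)).sum

def outLabels (T : STree L) : List L := T.children.map Prod.fst

def SameStage (v w : STree L) : Prop := ∀ l, l ∈ v.outLabels ↔ l ∈ w.outLabels

inductive OccursAt : STree L → ℕ → STree L → Prop where
  | refl (T : STree L) : OccursAt T 0 T
  | child {cs : List (L × STree L)} {l : L} {c v : STree L} {n : ℕ} :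
      (l, c) ∈ cs → OccursAt c n v → OccursAt (.node cs) (n + 1) v

def IsStagedTree (T : STree L) : Prop :=
  (∀ n cs, OccursAt T n (.node cs) → cs ≠ [] ∧ (cs.map Prod.fst).Nodup) ∧
  (∀ n m v w, OccursAt T n v → OccursAt T m w →
    (SameStage v w ∨ ∀ l, ¬(l ∈ v.outLabels ∧ l ∈ w.outLabels)))

def Star (v w : STree L) : Prop :=
  ∀ l l' c c' d d', l ≠ l' →
    (l, c) ∈ v.children → (l', c') ∈ v.children →
    (l, d) ∈ w.children → (l', d') ∈ w.children →
    tpoly c * tpoly d' = tpoly d * tpoly c'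

def Balanced (T : STree L) : Prop :=
  ∀ n m v w, OccursAt T n v → OccursAt T m w → SameStage v w → Star v w

def Stratified (T : STree L) : Prop :=
  (∀ n m, OccursAt T n .leaf → OccursAt T m .leaf → n = m) ∧
  (∀ n m v w, OccursAt T n v → OccursAt T m w → SameStage v w → n = m)

end STree

namespace STree
variable {L : Type}

def trunc : ℕ → STree L → STree L
  | 0, _ => .leaf
  | _ + 1, .leaf => .leaf
  | q + 1, .node cs => .node (cs.attach.map (fun x => (x.1.1, trunc q x.1.2)))

def contract : STree L → STree L
  | .leaf => .leaf
  | .node [(_, c)] => contract c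
  | .node cs => .node (cs.attach.map (fun x => (x.1.1, contract x.1.2)))
termination_by t => sizeOf t
decreasing_by
  · simp only [STree.node.sizeOf_spec, List.cons.sizeOf_spec, Prod.mk.sizeOf_spec,
      List.nil.sizeOf_spec]
    omega
  · have h := List.sizeOf_lt_of_mem x.2
    obtain ⟨⟨l, c⟩, hm⟩ := x
    simp only [Prod.mk.sizeOf_spec] at h
    simp only [STree.node.sizeOf_spec]
    omega

def glueAux (f : List L → List L) : List L → STree L → STree L
  | pre, .leaf => .node ((f pre).map (fun l => (l, .leaf)))
  | pre, .node cs => .node (cs.attach.map (fun x => (x.1.1, glueAux f (pre ++ [x.1.1]) x.1.2)))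
termination_by _ t => sizeOf t
decreasing_by
  have h := List.sizeOf_lt_of_mem x.2
  obtain ⟨⟨l, c⟩, hm⟩ := x
  simp only [Prod.mk.sizeOf_spec] at h
  simp only [STree.node.sizeOf_spec]
  omega

def cut : ℕ → STree L → List (List L × STree L)
  | 0, t => [([], t)]
  | _ + 1, .leaf => []
  | d + 1, .node cs => cs.attach.flatMap
      (fun x => (cut d x.1.2).map (fun q => (x.1.1 :: q.1, q.2)))

def OneLevel (T : STree L) : Prop :=
  ∃ cs, T = STree.node cs ∧ cs ≠ [] ∧ ∀ p ∈ cs, p.2 = STree.leaf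

def labelSet (T : STree L) : Set L := {l | ∃ p ∈ paths T, l ∈ p}

end STree

/-
Specialise the labels by `aeval (truncWeight T q)`: a label on an edge leaving level `< q` is
kept, and a label on an edge leaving level `≥ q` goes to `1 / k`, where `k` is the number of
edges leaving a vertex of its stage. Stratification makes the level of a label and this `k` well
defined, so by induction from the leaves `t u ↦ 1` for every vertex `u` of level `≥ q`, and then
`t v ↦ t (trunc (q - n) v)` for every vertex `v` of level `n ≤ q`. The images of the identities
`(⋆)` of `T` are the identities `(⋆)` of the truncation.
-/

namespace STree

variable {L : Type}

theorem induction_mem {P : STree L → Prop} (leaf : P .leaf)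
    (node : ∀ cs, (∀ p ∈ cs, P p.2) → P (.node cs)) : ∀ t, P t
  | .leaf => leaf
  | .node cs => node cs fun p _ => induction_mem leaf node p.2
termination_by t => sizeOf t
decreasing_by
  have h := List.sizeOf_lt_of_mem ‹p ∈ cs›
  obtain ⟨l, c⟩ := p
  simp only [Prod.mk.sizeOf_spec] at h
  simp only [STree.node.sizeOf_spec]
  omega

theorem tpoly_leaf : tpoly (leaf : STree L) = 1 := by
  simp [tpoly, paths]

theorem tpoly_node (cs : List (L × STree L)) :
    tpoly (node cs) = (cs.map fun p => X p.1 * tpoly p.2).sum := by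
  rw [tpoly, paths, List.map_flatMap, List.flatMap, List.sum_flatten, List.map_map,
    ← List.attach_map_val (l := cs) (f := fun p => X p.1 * tpoly p.2)]
  congr 1
  refine List.map_congr_left fun p _ => ?_
  simp only [Function.comp, List.map_map]
  rw [tpoly, ← List.sum_map_mul_left]
  rfl

@[simp]
theorem trunc_leaf (k : ℕ) : trunc k (leaf : STree L) = leaf := by
  cases k <;> rfl

theorem trunc_succ_node (k : ℕ) (cs : List (L × STree L)) :
    trunc (k + 1) (node cs) = node (cs.map fun p => (p.1, trunc k p.2)) := by
  rw [trunc]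
  congr 1
  exact List.attach_map_val (f := fun p : L × STree L => (p.1, trunc k p.2))

theorem children_trunc_succ (k : ℕ) (v : STree L) :
    (trunc (k + 1) v).children = v.children.map fun p => (p.1, trunc k p.2) := by
  cases v with
  | leaf => rfl
  | node cs => rw [trunc_succ_node]; rfl

theorem outLabels_trunc_succ (k : ℕ) (v : STree L) :
    (trunc (k + 1) v).outLabels = v.outLabels := by
  simp only [outLabels, children_trunc_succ, List.map_map]
  rfl

theorem sameStage_trunc_succ_iff {v w : STree L} {k k' : ℕ} :
    SameStage (trunc (k + 1) v) (trunc (k' + 1) w) ↔ SameStage v w := by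
  simp only [SameStage, outLabels_trunc_succ]

theorem OccursAt.trans {T v u : STree L} {n k : ℕ} (h₁ : OccursAt T n v)
    (h₂ : OccursAt v k u) : OccursAt T (n + k) u := by
  induction h₁ with
  | refl => simpa using h₂
  | child hmem _ ih => simpa [Nat.add_right_comm] using OccursAt.child hmem (ih h₂)

theorem OccursAt.of_mem_children {T v : STree L} {n : ℕ} {p : L × STree L}
    (h : OccursAt T n v) (hp : p ∈ v.children) : OccursAt T (n + 1) p.2 := by
  cases v with
  | leaf => simp [children] at hp
  | node cs => exact h.trans (.child hp (.refl p.2))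

theorem OccursAt.exists_of_trunc {T v : STree L} {n q : ℕ} (h : OccursAt (trunc q T) n v) :
    n ≤ q ∧ ∃ v', OccursAt T n v' ∧ v = trunc (q - n) v' := by
  generalize hE : trunc q T = t at h
  induction h generalizing q T with
  | refl => exact ⟨Nat.zero_le _, T, .refl T, by simpa using hE.symm⟩
  | child hmem _ ih =>
    obtain _ | q := q
    · cases T <;> simp [trunc] at hE
    cases T with
    | leaf => simp at hE
    | node ds =>
      rw [trunc_succ_node] at hE
      cases hE
      obtain ⟨⟨l, c₀⟩, hc₀, ⟨⟩⟩ := List.mem_map.1 hmem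
      obtain ⟨hk, v', hv', rfl⟩ := ih rfl
      exact ⟨by omega, v', .child hc₀ hv', by simp⟩

namespace IsStagedTree

variable {T : STree L}

theorem sameStage_of_mem (hst : IsStagedTree T) {v w : STree L} {n n' : ℕ} {l : L}
    (hv : OccursAt T n v) (hw : OccursAt T n' w) (hlv : l ∈ v.outLabels)
    (hlw : l ∈ w.outLabels) : SameStage v w :=
  (hst.2 n n' v w hv hw).resolve_right fun h => h l ⟨hlv, hlw⟩

theorem nodup_outLabels (hst : IsStagedTree T) {v : STree L} {n : ℕ} (hv : OccursAt T n v) :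
    v.outLabels.Nodup := by
  cases v with
  | leaf => exact List.nodup_nil
  | node cs => exact (hst.1 n cs hv).2

theorem eq_leaf_of_outLabels_eq_nil (hst : IsStagedTree T) {v : STree L} {n : ℕ}
    (hv : OccursAt T n v) (h : v.outLabels = []) : v = leaf := by
  cases v with
  | leaf => rfl
  | node cs => exact absurd (List.map_eq_nil_iff.1 h) (hst.1 n cs hv).1

theorem length_children_eq (hst : IsStagedTree T) {v w : STree L} {n n' : ℕ}
    (hv : OccursAt T n v) (hw : OccursAt T n' w) (hvw : SameStage v w) :
    v.children.length = w.children.length := by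
  simpa [outLabels] using
    ((List.perm_ext_iff_of_nodup (hst.nodup_outLabels hv) (hst.nodup_outLabels hw)).2
      hvw).length_eq

end IsStagedTree

open Classical in
noncomputable def truncWeight (T : STree L) (q : ℕ) (l : L) : MvPolynomial L ℝ :=
  if h : ∃ nv : ℕ × STree L, OccursAt T nv.1 nv.2 ∧ l ∈ nv.2.outLabels then
    if h.choose.1 < q then X l else C (h.choose.2.children.length : ℝ)⁻¹
  else 1

section truncWeight

variable {T : STree L} {q : ℕ}

theorem truncWeight_eq (hst : IsStagedTree T) (hS : Stratified T) {n : ℕ} {u : STree L} {l : L}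
    (hu : OccursAt T n u) (hl : l ∈ u.outLabels) :
    truncWeight T q l = if n < q then X l else C (u.children.length : ℝ)⁻¹ := by
  have hex : ∃ nv : ℕ × STree L, OccursAt T nv.1 nv.2 ∧ l ∈ nv.2.outLabels :=
    ⟨(n, u), hu, hl⟩
  obtain ⟨hv, hlv⟩ := hex.choose_spec
  have hstage := hst.sameStage_of_mem hv hu hlv hl
  rw [truncWeight, dif_pos hex, hS.2 _ _ _ _ hv hu hstage, hst.length_children_eq hv hu hstage]

theorem aeval_truncWeight_tpoly_of_le (hst : IsStagedTree T) (hS : Stratified T) (v : STree L)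
    {n : ℕ} (hv : OccursAt T n v) (hqn : q ≤ n) : aeval (truncWeight T q) (tpoly v) = 1 := by
  induction v using induction_mem generalizing n with
  | leaf => simp [tpoly_leaf]
  | node cs ih =>
    have hterm : ∀ p ∈ cs,
        aeval (truncWeight T q) (X p.1 * tpoly p.2) = C (cs.length : ℝ)⁻¹ := by
      intro p hp
      rw [map_mul, aeval_X, ih p hp (hv.of_mem_children hp) (by omega), mul_one,
        truncWeight_eq hst hS hv (List.mem_map_of_mem hp), if_neg (by omega)]
      rfl
    have hcs : (cs.length : ℝ) ≠ 0 := by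
      exact_mod_cast mt List.length_eq_zero_iff.1 (hst.1 n cs hv).1
    rw [tpoly_node, map_list_sum, List.map_map, Function.comp_def, List.map_congr_left hterm,
      List.map_const', List.sum_replicate, ← map_nsmul, nsmul_eq_mul, mul_inv_cancel₀ hcs,
      map_one]

theorem aeval_truncWeight_tpoly (hst : IsStagedTree T) (hS : Stratified T) (v : STree L)
    {n : ℕ} (hv : OccursAt T n v) (hnq : n ≤ q) :
    aeval (truncWeight T q) (tpoly v) = tpoly (trunc (q - n) v) := by
  induction v using induction_mem generalizing n with
  | leaf => simp [tpoly_leaf]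
  | node cs ih =>
    obtain rfl | hlt := hnq.eq_or_lt
    · rw [Nat.sub_self, aeval_truncWeight_tpoly_of_le hst hS _ hv le_rfl]
      exact tpoly_leaf.symm
    obtain ⟨k, hk⟩ : ∃ k, q - n = k + 1 := ⟨q - n - 1, by omega⟩
    rw [hk, trunc_succ_node, tpoly_node, tpoly_node, map_list_sum, List.map_map, List.map_map]
    refine congrArg List.sum (List.map_congr_left fun p hp => ?_)
    rw [Function.comp_apply, map_mul, aeval_X,
      truncWeight_eq hst hS hv (List.mem_map_of_mem hp), if_pos hlt,
      ih p hp (hv.of_mem_children hp) (by omega), show q - (n + 1) = k by omega]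
    rfl

end truncWeight

theorem Star.trunc_succ {F : Type*} [FunLike F (MvPolynomial L ℝ) (MvPolynomial L ℝ)]
    [MulHomClass F (MvPolynomial L ℝ) (MvPolynomial L ℝ)] (φ : F) {v w : STree L} {k k' : ℕ}
    (h : Star v w) (hv : ∀ p ∈ v.children, φ (tpoly p.2) = tpoly (trunc k p.2))
    (hw : ∀ p ∈ w.children, φ (tpoly p.2) = tpoly (trunc k' p.2)) :
    Star (trunc (k + 1) v) (trunc (k' + 1) w) := by
  intro l l' c c' d d' hll' hc hc' hd hd'
  simp only [children_trunc_succ, List.mem_map, Prod.mk.injEq] at hc hc' hd hd'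
  obtain ⟨⟨_, c₀⟩, hc₀, rfl, rfl⟩ := hc
  obtain ⟨⟨_, c₀'⟩, hc₀', rfl, rfl⟩ := hc'
  obtain ⟨⟨_, d₀⟩, hd₀, rfl, rfl⟩ := hd
  obtain ⟨⟨_, d₀'⟩, hd₀', rfl, rfl⟩ := hd'
  have := congrArg φ (h _ _ c₀ c₀' d₀ d₀' hll' hc₀ hc₀' hd₀ hd₀')
  rwa [map_mul, map_mul, hv _ hc₀, hv _ hc₀', hw _ hd₀, hw _ hd₀'] at this

theorem star_of_children_eq_nil_left {v w : STree L} (h : v.children = []) : Star v w := by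
  intro _ _ _ _ _ _ _ hc
  simp [h] at hc

theorem star_of_children_eq_nil_right {v w : STree L} (h : w.children = []) : Star v w := by
  intro _ _ _ _ _ _ _ _ _ hd
  simp [h] at hd

theorem Balanced.trunc {T : STree L} (hst : IsStagedTree T) (hS : Stratified T)
    (hbal : Balanced T) (q : ℕ) : Balanced (trunc q T) := by
  intro n n' v w hv hw hvw
  obtain ⟨-, v₀, hv₀, rfl⟩ := hv.exists_of_trunc
  obtain ⟨-, w₀, hw₀, rfl⟩ := hw.exists_of_trunc
  by_cases hk : q - n = 0
  · exact star_of_children_eq_nil_left (by rw [hk]; rfl)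
  by_cases hk' : q - n' = 0
  · exact star_of_children_eq_nil_right (by rw [hk']; rfl)
  obtain ⟨k, hk⟩ := Nat.exists_eq_add_one_of_ne_zero hk
  obtain ⟨k', hk'⟩ := Nat.exists_eq_add_one_of_ne_zero hk'
  rw [hk, hk'] at hvw ⊢
  refine (hbal n n' v₀ w₀ hv₀ hw₀ (sameStage_trunc_succ_iff.1 hvw)).trunc_succ
    (aeval (truncWeight T q)) (fun p hp => ?_) (fun p hp => ?_)
  · rw [aeval_truncWeight_tpoly hst hS _ (hv₀.of_mem_children hp) (by omega),
      show q - (n + 1) = k by omega]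
  · rw [aeval_truncWeight_tpoly hst hS _ (hw₀.of_mem_children hp) (by omega),
      show q - (n' + 1) = k' by omega]

theorem Stratified.level_eq_of_trunc {T v : STree L} (hst : IsStagedTree T) (hS : Stratified T)
    {m q n : ℕ} (hm : OccursAt T m leaf) (hqm : q ≤ m) (hv : OccursAt (trunc q T) n v)
    (hleaf : v.outLabels = []) : n = q := by
  obtain ⟨hnq, v₀, hv₀, rfl⟩ := hv.exists_of_trunc
  by_contra hne
  obtain ⟨k, hk⟩ : ∃ k, q - n = k + 1 := ⟨q - n - 1, by omega⟩
  rw [hk, outLabels_trunc_succ] at hleaf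
  rw [hst.eq_leaf_of_outLabels_eq_nil hv₀ hleaf] at hv₀
  have := hS.1 _ _ hv₀ hm
  omega

theorem SameStage.outLabels_eq_nil_iff {v w : STree L} (h : SameStage v w) :
    v.outLabels = [] ↔ w.outLabels = [] := by
  simp only [List.eq_nil_iff_forall_not_mem, h _]

theorem Stratified.trunc {T : STree L} (hst : IsStagedTree T) (hS : Stratified T)
    {m q : ℕ} (hm : OccursAt T m leaf) (hqm : q ≤ m) : Stratified (trunc q T) := by
  refine ⟨fun n n' hv hw => ?_, fun n n' v w hv hw hvw => ?_⟩
  · rw [hS.level_eq_of_trunc hst hm hqm hv rfl, hS.level_eq_of_trunc hst hm hqm hw rfl]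
  by_cases hleaf : v.outLabels = []
  · rw [hS.level_eq_of_trunc hst hm hqm hv hleaf,
      hS.level_eq_of_trunc hst hm hqm hw (hvw.outLabels_eq_nil_iff.1 hleaf)]
  have hleaf' : w.outLabels ≠ [] := mt hvw.outLabels_eq_nil_iff.2 hleaf
  obtain ⟨-, v₀, hv₀, rfl⟩ := hv.exists_of_trunc
  obtain ⟨-, w₀, hw₀, rfl⟩ := hw.exists_of_trunc
  obtain ⟨k, hk⟩ :=
    Nat.exists_eq_add_one_of_ne_zero (n := q - n) fun h => hleaf (by rw [h]; rfl)
  obtain ⟨k', hk'⟩ :=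
    Nat.exists_eq_add_one_of_ne_zero (n := q - n') fun h => hleaf' (by rw [h]; rfl)
  rw [hk, hk'] at hvw
  exact hS.2 n n' v₀ w₀ hv₀ hw₀ (sameStage_trunc_succ_iff.1 hvw)

end STree

open STree in
theorem stmt2_general {L : Type} (T : STree L) (hst : IsStagedTree T) (hS : Stratified T)
    {m q : ℕ} (hm : OccursAt T m STree.leaf) (hq2 : q ≤ m - 1)
    (hbal : Balanced T) :
    Balanced (trunc q T) ∧ Stratified (trunc q T) :=
  ⟨hbal.trunc hst hS q, hS.trunc hst hm (by omega)⟩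

open STree in
theorem stmt2 {L : Type} (T : STree L) (hst : IsStagedTree T) (hS : Stratified T)
    {m q : ℕ} (hm : OccursAt T m STree.leaf) (hq1 : 1 ≤ q) (hq2 : q ≤ m - 1)
    (hbal : Balanced T) :
    Balanced (trunc q T) ∧ Stratified (trunc q T) :=
  stmt2_general T hst hS hm hq2 hbal
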